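/- Let E be a Hilbert space and let S be a doubly commuting submodule of H²_E(𝔻_2^∞), i.e. a closed subspace invariant under every coordinate multiplication operator M_{ζ_n} such that the restricted sequence 𝐑 = (M_{ζ_1}|_S, M_{ζ_2}|_S, …) is doubly commuting. Then 𝐑 is a doubly commuting sequence of pure isometries on S and is of Beurling type: the smallest closed subspace of S containing the defect space 𝔇_{𝐑*} and invariant under every M_{ζ_n}|_S is S itself. -/

import Mathlib

/- Common definitions for formalizing "Dilation theory and analytic model theory for
doubly commuting sequences of C_{·0}-contractions" by H. Dan and K. Guo. -/

open Filter Topology ContinuousLinearMap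

noncomputable section

universe u v

namespace DCPaper

variable {H : Type u} [NormedAddCommGroup H] [InnerProductSpace ℂ H] [CompleteSpace H]
variable {K : Type v} [NormedAddCommGroup K] [InnerProductSpace ℂ K] [CompleteSpace K]

/-- `T` is a contraction of class `C_{·0}`: `‖T‖ ≤ 1` and `T^{*k} → 0` in the strong
operator topology. -/
def IsCzeroContraction (T : H →L[ℂ] H) : Prop :=
  ‖T‖ ≤ 1 ∧ ∀ x : H, Tendsto (fun k : ℕ => (adjoint T ^ k) x) atTop (𝓝 0)

/-- `S` and `T` doubly commute: `ST = TS` and `ST* = T*S`. -/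
def DoublyCommute (S T : H →L[ℂ] H) : Prop :=
  S * T = T * S ∧ S * adjoint T = adjoint T * S

/-- `𝐓 ∈ 𝒟𝒞(H)`: a doubly commuting sequence of `C_{·0}`-contractions. -/
def IsDCSeq (T : ℕ → H →L[ℂ] H) : Prop :=
  (∀ n, IsCzeroContraction (T n)) ∧ ∀ m n : ℕ, m ≠ n → DoublyCommute (T m) (T n)

/-- A pure isometry: an isometry of class `C_{·0}`. -/
def IsPureIsometry (V : H →L[ℂ] H) : Prop :=
  (∀ x : H, ‖V x‖ = ‖x‖) ∧
    ∀ x : H, Tendsto (fun k : ℕ => (adjoint V ^ k) x) atTop (𝓝 0)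

/-- `𝐕 ∈ 𝒟𝒫(H)`: a doubly commuting sequence of pure isometries. -/
def IsDPSeq (V : ℕ → H →L[ℂ] H) : Prop :=
  (∀ n, IsPureIsometry (V n)) ∧ ∀ m n : ℕ, m ≠ n → DoublyCommute (V m) (V n)

/-- The defect operator `D_T = (I - T*T)^{1/2}` of a contraction `T`. -/
def defectOp (T : H →L[ℂ] H) : H →L[ℂ] H :=
  CFC.sqrt (1 - adjoint T * T)

/-- The finite product `D_{T_0} ⋯ D_{T_{N-1}}` of defect operators. -/
def partialDefect (T : ℕ → H →L[ℂ] H) (N : ℕ) : H →L[ℂ] H :=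
  ((List.range N).map fun n => defectOp (T n)).prod

/-- `D` is the defect operator `D_𝐓` of the sequence `𝐓`, i.e. the strong operator
topology limit of the partial products `D_{T_1} ⋯ D_{T_n}`. -/
def IsSeqDefect (T : ℕ → H →L[ℂ] H) (D : H →L[ℂ] H) : Prop :=
  ∀ x : H, Tendsto (fun N : ℕ => partialDefect T N x) atTop (𝓝 (D x))

/-- `φ_a(T) = (aI - T)(I - āT)⁻¹` (Möbius transform of an operator). -/
def mobius (a : ℂ) (T : H →L[ℂ] H) : H →L[ℂ] H :=
  (a • (1 : H →L[ℂ] H) - T) * Ring.inverse (1 - (starRingEnd ℂ a) • T)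

/-- Membership in `𝔻^∞`, the countable product of copies of the open unit disk. -/
def InPolydisc (l : ℕ → ℂ) : Prop := ∀ n, ‖l n‖ < 1

/-- Membership in the Hilbert multidisc `𝔻_2^∞ = {ζ ∈ ℓ² : |ζ_n| < 1 for all n}`. -/
def InHilbertMultidisc (l : ℕ → ℂ) : Prop :=
  (∀ n, ‖l n‖ < 1) ∧ Summable fun n => ‖l n‖ ^ 2

/-- The sequence `Φ_λ(𝐓)* = (φ_{λ_1}(T_1)*, φ_{λ_2}(T_2)*, …)`. -/
def mobiusStarSeq (l : ℕ → ℂ) (T : ℕ → H →L[ℂ] H) : ℕ → H →L[ℂ] H :=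
  fun n => adjoint (mobius (l n) (T n))

/-- `𝐓^α = T_1^{α_1} ⋯ T_n^{α_n}` for a finitely supported multi-index `α`. -/
def opPow (T : ℕ → H →L[ℂ] H) (α : ℕ →₀ ℕ) : H →L[ℂ] H :=
  ((List.range (α.support.sup id + 1)).map fun n => T n ^ α n).prod

/-- Restriction of a continuous linear map to an invariant submodule. -/
def clmRestrict (f : H →L[ℂ] H) {M : Submodule ℂ H}
    (hf : ∀ x ∈ M, f x ∈ M) : M →L[ℂ] M :=
  { toLinearMap := (f : H →ₗ[ℂ] H).restrict hf
    cont := (f.continuous.comp continuous_subtype_val).subtype_mk _ }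

/-- Compression `P_M A|_M` of an operator `A` to a closed subspace `M`. -/
def compress {M : Submodule ℂ H} (hM : IsClosed (M : Set H))
    (A : H →L[ℂ] H) : M →L[ℂ] M :=
  haveI : CompleteSpace M := hM.completeSpace_coe
  M.orthogonalProjectionOnto.comp (A.comp M.subtypeL)

/-- `𝐕` is a regular isometric dilation of `𝐓`, where `J : H →L[ℂ] K` is the isometric
inclusion of `H` into the dilation space `K`:  each `V n` is an isometry,
`𝐓^α = P_H 𝐕^α |_H` for every multi-index `α`, and
`𝐓^{*α} 𝐓^β = P_H 𝐕^{*α} 𝐕^β |_H` whenever `min (α n) (β n) = 0` for all `n`. -/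
def IsRegularIsometricDilation (T : ℕ → H →L[ℂ] H) (J : H →L[ℂ] K)
    (V : ℕ → K →L[ℂ] K) : Prop :=
  (∀ x : H, ‖J x‖ = ‖x‖) ∧ (∀ n, ∀ y : K, ‖V n y‖ = ‖y‖) ∧
  (∀ (α : ℕ →₀ ℕ) (x : H), opPow T α x = adjoint J (opPow V α (J x))) ∧
  ∀ α β : ℕ →₀ ℕ, (∀ n, min (α n) (β n) = 0) → ∀ x : H,
    adjoint (opPow T α) (opPow T β x) =
      adjoint J (adjoint (opPow V α) (opPow V β (J x)))

/-- Minimality of a dilation: the smallest closed subspace of `K` containing `J(H)` and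
invariant under every `V n` is `K` itself. -/
def IsMinimalFor (J : H →L[ℂ] K) (V : ℕ → K →L[ℂ] K) : Prop :=
  ∀ M : Submodule ℂ K, IsClosed (M : Set K) → (∀ x : H, J x ∈ M) →
    (∀ n, ∀ y ∈ M, V n y ∈ M) → M = ⊤

/-- A sequence of isometries is of Beurling type: the smallest closed subspace containing
the defect space `𝔇_{𝐕*}` (the closed range of the defect operator `D_{𝐕*}`) and
invariant under every `V n` is the whole space. -/
def IsBeurlingSeq (V : ℕ → K →L[ℂ] K) : Prop :=
  ∃ D : K →L[ℂ] K, IsSeqDefect (fun n => adjoint (V n)) D ∧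
    ∀ M : Submodule ℂ K, IsClosed (M : Set K) → (∀ y : K, D y ∈ M) →
      (∀ n, ∀ y ∈ M, V n y ∈ M) → M = ⊤

/-- A sequence of isometries is of quasi-Beurling type: `Φ_λ(𝐕)` is of Beurling type for
some `λ ∈ 𝔻^∞`. -/
def IsQuasiBeurlingSeq (V : ℕ → K →L[ℂ] K) : Prop :=
  ∃ l : ℕ → ℂ, InPolydisc l ∧ IsBeurlingSeq fun n => mobius (l n) (V n)

/-- `𝐓 ∈ 𝒟𝒞` is of Beurling type: its minimal regular isometric dilation is of
Beurling type. -/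
def IsBeurlingDC (T : ℕ → H →L[ℂ] H) : Prop :=
  ∃ (K' : Type u) (_ : NormedAddCommGroup K') (_ : InnerProductSpace ℂ K')
    (_ : CompleteSpace K') (J : H →L[ℂ] K') (V : ℕ → K' →L[ℂ] K'),
    IsRegularIsometricDilation T J V ∧ IsMinimalFor J V ∧ IsBeurlingSeq V

/-- `𝐓 ∈ 𝒟𝒞` is of quasi-Beurling type: its minimal regular isometric dilation is of
quasi-Beurling type. -/
def IsQuasiBeurlingDC (T : ℕ → H →L[ℂ] H) : Prop :=
  ∃ (K' : Type u) (_ : NormedAddCommGroup K') (_ : InnerProductSpace ℂ K')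
    (_ : CompleteSpace K') (J : H →L[ℂ] K') (V : ℕ → K' →L[ℂ] K'),
    IsRegularIsometricDilation T J V ∧ IsMinimalFor J V ∧ IsQuasiBeurlingSeq V

/-- The family `Mz` of operators on the `E`-valued Hardy space
`H²_E(𝔻_2^∞) = lp (fun _ : (ℕ →₀ ℕ) => E) 2` is the tuple of coordinate multiplication
operators `𝐌_ζ`, characterized on the canonical orthonormal system. -/
def IsCoordMult {E : Type*} [NormedAddCommGroup E] [InnerProductSpace ℂ E]
    [CompleteSpace E]
    (Mz : ℕ → lp (fun _ : (ℕ →₀ ℕ) => E) 2 →L[ℂ] lp (fun _ : (ℕ →₀ ℕ) => E) 2) : Prop :=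
  ∀ (n : ℕ) (α : ℕ →₀ ℕ) (x : E),
    Mz n (lp.single 2 α x) = lp.single 2 (α + Finsupp.single n 1) x

/-- The one-variable shift `M_z` on the `E`-valued Hardy space of the disk
`H²_E(𝔻) = lp (fun _ : ℕ => E) 2`, characterized on the canonical orthonormal system. -/
def IsOneShift {E : Type*} [NormedAddCommGroup E] [InnerProductSpace ℂ E]
    [CompleteSpace E]
    (S : lp (fun _ : ℕ => E) 2 →L[ℂ] lp (fun _ : ℕ => E) 2) : Prop :=
  ∀ (k : ℕ) (x : E), S (lp.single 2 k x) = lp.single 2 (k + 1) x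

/-- The monomial `ζ^α`. -/
def monomial (ζ : ℕ → ℂ) (α : ℕ →₀ ℕ) : ℂ := α.prod fun n k => ζ n ^ k

/-- Evaluation of an element of the vector-valued Hardy space `H²_E(𝔻_2^∞)` at a point
`ζ` of the Hilbert multidisc: `F(ζ) = Σ_α ζ^α • F_α`. -/
def hardyEval {E : Type*} [NormedAddCommGroup E] [InnerProductSpace ℂ E]
    (F : lp (fun _ : (ℕ →₀ ℕ) => E) 2) (ζ : ℕ → ℂ) : E :=
  ∑' α : ℕ →₀ ℕ, monomial ζ α • F α

/-- Evaluation of an element of the vector-valued Hardy space `H²_E(𝔻)` of the disk at a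
point `z ∈ 𝔻`: `g(z) = Σ_k z^k • g_k`. -/
def diskEval {E : Type*} [NormedAddCommGroup E] [InnerProductSpace ℂ E]
    (g : lp (fun _ : ℕ => E) 2) (z : ℂ) : E :=
  ∑' k : ℕ, z ^ k • g k

/-- The Hilbert multidisc `𝔻_2^∞` as a subset of `ℓ²`. -/
def hilbertMultidisc : Set (lp (fun _ : ℕ => ℂ) 2) := {ζ | ∀ n, ‖ζ n‖ < 1}


/-- The restriction of the sequence `A` to a closed jointly invariant subspace `M` is a
doubly commuting sequence of operators on `M`. -/
def RestrictedDoublyCommuting (A : ℕ → H →L[ℂ] H) (M : Submodule ℂ H) : Prop :=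
  ∀ (hM : IsClosed (M : Set H)) (hinv : ∀ n, ∀ x ∈ M, A n x ∈ M),
    haveI : CompleteSpace M := hM.completeSpace_coe
    ∀ m n : ℕ, m ≠ n →
      DoublyCommute (clmRestrict (A m) (hinv m)) (clmRestrict (A n) (hinv n))

/-- The restriction of the sequence `A` to a closed jointly invariant subspace `M` is of
quasi-Beurling type. -/
def RestrictQuasiBeurling (A : ℕ → H →L[ℂ] H) (M : Submodule ℂ H) : Prop :=
  ∀ (hM : IsClosed (M : Set H)) (hinv : ∀ n, ∀ x ∈ M, A n x ∈ M),
    haveI : CompleteSpace M := hM.completeSpace_coe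
    IsQuasiBeurlingDC fun n => clmRestrict (A n) (hinv n)

/-! ### Auxiliary general Hilbert space lemmas -/

section Aux

lemma isometry_adjoint_mul_self {V : H →L[ℂ] H} (h : ∀ x, ‖V x‖ = ‖x‖) :
    adjoint V * V = 1 := by
  ext x
  refine ext_inner_left ℂ fun v => ?_
  rw [ContinuousLinearMap.mul_apply, adjoint_inner_right, ContinuousLinearMap.one_apply]
  exact LinearIsometry.inner_map_map ⟨V.toLinearMap, h⟩ v x

lemma sa_idem_norm_apply_le {p : H →L[ℂ] H} (hsa : IsSelfAdjoint p) (hidem : p * p = p)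
    (x : H) : ‖p x‖ ≤ ‖x‖ := by
  have hadj : adjoint p = p := by rw [← star_eq_adjoint, hsa.star_eq]
  have h1 : (inner ℂ (p x) (p x) : ℂ) = inner ℂ x (p x) := by
    calc (inner ℂ (p x) (p x) : ℂ) = inner ℂ x (adjoint p (p x)) :=
          (adjoint_inner_right p x (p x)).symm
      _ = inner ℂ x ((p * p) x) := by rw [hadj, ContinuousLinearMap.mul_apply]
      _ = inner ℂ x (p x) := by rw [hidem]
  have e1 := inner_self_eq_norm_mul_norm (𝕜 := ℂ) (p x)
  have e2 : RCLike.re (inner ℂ x (p x) : ℂ) ≤ ‖x‖ * ‖p x‖ :=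
    le_trans (RCLike.re_le_norm _) (norm_inner_le_norm (𝕜 := ℂ) x (p x))
  have h2 : ‖p x‖ * ‖p x‖ ≤ ‖x‖ * ‖p x‖ := by rw [← e1, h1]; exact e2
  nlinarith [norm_nonneg (p x), norm_nonneg x]

lemma norm_adjoint_apply_le {B : H →L[ℂ] H} (hB : ∀ z, ‖B z‖ = ‖z‖) (z : H) :
    ‖adjoint B z‖ ≤ ‖z‖ := by
  have h1 : (inner ℂ (adjoint B z) (adjoint B z) : ℂ) = inner ℂ z (B (adjoint B z)) :=
    adjoint_inner_left B (adjoint B z) z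
  have e1 := inner_self_eq_norm_mul_norm (𝕜 := ℂ) (adjoint B z)
  have e2 : RCLike.re (inner ℂ z (B (adjoint B z)) : ℂ) ≤ ‖z‖ * ‖adjoint B z‖ := by
    refine le_trans (RCLike.re_le_norm _) ?_
    calc ‖(inner ℂ z (B (adjoint B z)) : ℂ)‖ ≤ ‖z‖ * ‖B (adjoint B z)‖ :=
          norm_inner_le_norm (𝕜 := ℂ) _ _
      _ = ‖z‖ * ‖adjoint B z‖ := by rw [hB]
  have h2 : ‖adjoint B z‖ * ‖adjoint B z‖ ≤ ‖z‖ * ‖adjoint B z‖ := by rw [← e1, h1]; exact e2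
  nlinarith [norm_nonneg (adjoint B z), norm_nonneg z]

lemma pow_isometry {B : H →L[ℂ] H} (hB : ∀ x, ‖B x‖ = ‖x‖) (k : ℕ) (x : H) :
    ‖(B ^ k) x‖ = ‖x‖ := by
  induction k generalizing x with
  | zero => rw [pow_zero, ContinuousLinearMap.one_apply]
  | succ k ih =>
    rw [pow_succ']
    calc ‖(B * B ^ k) x‖ = ‖B ((B ^ k) x)‖ := rfl
      _ = ‖(B ^ k) x‖ := hB _
      _ = ‖x‖ := ih x

/-- `Q_n = I - V_n V_n*`. -/
def Qop (V : ℕ → H →L[ℂ] H) (n : ℕ) : H →L[ℂ] H := 1 - V n * adjoint (V n)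

/-- `P_N = Q_0 ⋯ Q_{N-1}`. -/
def Pop (V : ℕ → H →L[ℂ] H) (N : ℕ) : H →L[ℂ] H := ((List.range N).map (Qop V)).prod

/-- `B_{K,N} = ∏_{n<N} (I - V_n^K V_n^{*K})`. -/
def Bop (V : ℕ → H →L[ℂ] H) (K N : ℕ) : H →L[ℂ] H :=
  ((List.range N).map fun n => 1 - V n ^ K * adjoint (V n) ^ K).prod

variable {V : ℕ → H →L[ℂ] H}

section Comm
variable (hdc : ∀ m n : ℕ, m ≠ n → DoublyCommute (V m) (V n))
include hdc

lemma commute_VV {m n : ℕ} (h : m ≠ n) : Commute (V m) (V n) := (hdc m n h).1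

lemma commute_VA {m n : ℕ} (h : m ≠ n) : Commute (V m) (adjoint (V n)) := (hdc m n h).2

lemma commute_AV {m n : ℕ} (h : m ≠ n) : Commute (adjoint (V m)) (V n) :=
  ((hdc n m h.symm).2).symm

lemma commute_AA {m n : ℕ} (h : m ≠ n) :
    Commute (adjoint (V m)) (adjoint (V n)) := by
  have := (commute_VV hdc h).star_star
  rwa [star_eq_adjoint, star_eq_adjoint] at this

lemma commute_VQ {m n : ℕ} (h : m ≠ n) : Commute (V m) (Qop V n) :=
  (Commute.one_right _).sub_right ((commute_VV hdc h).mul_right (commute_VA hdc h))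

lemma commute_AQ {m n : ℕ} (h : m ≠ n) : Commute (adjoint (V m)) (Qop V n) :=
  (Commute.one_right _).sub_right ((commute_AV hdc h).mul_right (commute_AA hdc h))

lemma commute_QQ {m n : ℕ} (h : m ≠ n) : Commute (Qop V m) (Qop V n) :=
  (Commute.one_left _).sub_left ((commute_VQ hdc h).mul_left (commute_AQ hdc h))

end Comm

lemma Qop_sa (n : ℕ) : IsSelfAdjoint (Qop V n) := by
  unfold Qop
  rw [IsSelfAdjoint, star_sub, star_one, star_mul, star_eq_adjoint, star_eq_adjoint,
    adjoint_adjoint]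

section Iso
variable (hiso : ∀ n, adjoint (V n) * V n = 1)
include hiso

lemma Qop_idem (n : ℕ) : Qop V n * Qop V n = Qop V n := by
  have hx : (V n * adjoint (V n)) * (V n * adjoint (V n)) = V n * adjoint (V n) := by
    rw [mul_assoc, ← mul_assoc (adjoint (V n)), hiso, one_mul]
  unfold Qop
  rw [sub_mul, one_mul, mul_sub, mul_one, hx]
  abel

lemma A_mul_Qop (n : ℕ) : adjoint (V n) * Qop V n = 0 := by
  unfold Qop
  rw [mul_sub, mul_one, ← mul_assoc, hiso, one_mul, sub_self]

lemma pow_A_mul_pow_V (n K : ℕ) : adjoint (V n) ^ K * V n ^ K = 1 := by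
  induction K with
  | zero => simp
  | succ k ih =>
    rw [pow_succ, pow_succ']
    calc adjoint (V n) ^ k * adjoint (V n) * (V n * V n ^ k)
        = adjoint (V n) ^ k * (adjoint (V n) * V n) * V n ^ k := by
          simp [mul_assoc]
      _ = 1 := by rw [hiso, mul_one, ih]

omit hiso in
lemma pow_sa (n K : ℕ) : IsSelfAdjoint (V n ^ K * adjoint (V n) ^ K) := by
  rw [IsSelfAdjoint, star_mul, star_pow, star_pow, star_eq_adjoint, star_eq_adjoint,
    adjoint_adjoint]

lemma pow_idem (n K : ℕ) :
    (V n ^ K * adjoint (V n) ^ K) * (V n ^ K * adjoint (V n) ^ K)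
      = V n ^ K * adjoint (V n) ^ K := by
  rw [mul_assoc, ← mul_assoc (adjoint (V n) ^ K), pow_A_mul_pow_V hiso, one_mul]

/-- telescoping sum `I - V^K V^{*K} = ∑_{k<K} V^k Q V^{*k}` -/
lemma telescope (n K : ℕ) :
    1 - V n ^ K * adjoint (V n) ^ K
      = ∑ k ∈ Finset.range K, V n ^ k * Qop V n * adjoint (V n) ^ k := by
  induction K with
  | zero => simp
  | succ k ih =>
    rw [Finset.sum_range_succ, ← ih]
    have : V n ^ k * Qop V n * adjoint (V n) ^ k
        = V n ^ k * adjoint (V n) ^ k - V n ^ (k+1) * adjoint (V n) ^ (k+1) := by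
      unfold Qop
      rw [mul_sub, mul_one, sub_mul, pow_succ, pow_succ']
      simp [mul_assoc]
    rw [this]
    abel

end Iso

lemma Pop_zero : Pop V 0 = 1 := rfl

lemma Pop_succ (N : ℕ) : Pop V (N + 1) = Pop V N * Qop V N := by
  unfold Pop
  rw [List.range_succ, List.map_append, List.prod_append]
  simp

lemma commute_Pop {x : H →L[ℂ] H} (N : ℕ) (hx : ∀ n, n < N → Commute x (Qop V n)) :
    Commute x (Pop V N) := by
  apply Commute.list_prod_right
  intro y hy
  simp only [List.mem_map, List.mem_range] at hy
  obtain ⟨n, hn, rfl⟩ := hy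
  exact hx n hn

section WithDC
variable (hdc : ∀ m n : ℕ, m ≠ n → DoublyCommute (V m) (V n))
  (hiso : ∀ n, adjoint (V n) * V n = 1)
include hdc

lemma commute_Q_Pop (N : ℕ) : Commute (Qop V N) (Pop V N) :=
  commute_Pop N fun _ hn => commute_QQ hdc (Nat.ne_of_gt hn)

lemma commute_A_Pop (N : ℕ) : Commute (adjoint (V N)) (Pop V N) :=
  commute_Pop N fun _ hn => commute_AQ hdc (Nat.ne_of_gt hn)

lemma Pop_sa (N : ℕ) : IsSelfAdjoint (Pop V N) := by
  induction N with
  | zero => rw [Pop_zero]; exact IsSelfAdjoint.one _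
  | succ n ih =>
    rw [Pop_succ, IsSelfAdjoint, star_mul, ih.star_eq, (Qop_sa n).star_eq]
    exact (commute_Q_Pop hdc n).eq

include hiso

lemma Pop_idem (N : ℕ) : Pop V N * Pop V N = Pop V N := by
  induction N with
  | zero => rw [Pop_zero, one_mul]
  | succ n ih =>
    have hc := (commute_Q_Pop hdc n).eq
    rw [Pop_succ, mul_assoc (Pop V n) (Qop V n), ← mul_assoc (Qop V n), hc,
      mul_assoc (Pop V n) (Qop V n), ← mul_assoc (Pop V n) (Pop V n), ih]
    rw [Qop_idem hiso]

lemma Pop_A_zero {n N : ℕ} (h : n < N) : adjoint (V n) * Pop V N = 0 := by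
  induction N with
  | zero => omega
  | succ m ih =>
    rw [Pop_succ]
    rcases Nat.lt_succ_iff_lt_or_eq.mp h with h' | rfl
    · rw [← mul_assoc, ih h', zero_mul]
    · rw [← mul_assoc, (commute_A_Pop hdc n).eq, mul_assoc, A_mul_Qop hiso, mul_zero]

lemma Pop_mul_Pop {N M : ℕ} (h : N ≤ M) : Pop V N * Pop V M = Pop V M := by
  induction M, h using Nat.le_induction with
  | base => exact Pop_idem hdc hiso N
  | succ m hm ih => rw [Pop_succ, ← mul_assoc, ih]

lemma Pop_norm_le (N : ℕ) (x : H) : ‖Pop V N x‖ ≤ ‖x‖ :=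
  sa_idem_norm_apply_le (Pop_sa hdc N) (Pop_idem hdc hiso N) x

end WithDC

lemma Pop_apply_w {w : H} {N : ℕ} (h : ∀ n, n < N → adjoint (V n) w = 0) :
    Pop V N w = w := by
  induction N with
  | zero => rw [Pop_zero, ContinuousLinearMap.one_apply]
  | succ n ih =>
    rw [Pop_succ, ContinuousLinearMap.mul_apply]
    have hq : Qop V n w = w := by
      rw [Qop, sub_apply, ContinuousLinearMap.one_apply, ContinuousLinearMap.mul_apply, h n (Nat.lt_succ_self n), map_zero, sub_zero]
    rw [hq, ih fun m hm => h m (hm.trans (Nat.lt_succ_self n))]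

lemma Bop_zero (K : ℕ) : Bop V K 0 = 1 := rfl

lemma Bop_succ (K N : ℕ) :
    Bop V K (N + 1) = Bop V K N * (1 - V N ^ K * adjoint (V N) ^ K) := by
  unfold Bop
  rw [List.range_succ, List.map_append, List.prod_append]
  simp

lemma one_sub_pow_idem (hiso : ∀ n, adjoint (V n) * V n = 1) (n K : ℕ) :
    (1 - V n ^ K * adjoint (V n) ^ K) * (1 - V n ^ K * adjoint (V n) ^ K)
      = 1 - V n ^ K * adjoint (V n) ^ K := by
  rw [sub_mul, one_mul, mul_sub, mul_one, pow_idem hiso]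
  abel

lemma one_sub_pow_sa (n K : ℕ) :
    IsSelfAdjoint (1 - V n ^ K * adjoint (V n) ^ K : H →L[ℂ] H) :=
  (IsSelfAdjoint.one _).sub (pow_sa n K)

lemma Bop_norm_le (hiso : ∀ n, adjoint (V n) * V n = 1) (K N : ℕ) (u : H) :
    ‖Bop V K N u‖ ≤ ‖u‖ := by
  induction N generalizing u with
  | zero => rw [Bop_zero, ContinuousLinearMap.one_apply]
  | succ n ih =>
    rw [Bop_succ, ContinuousLinearMap.mul_apply]
    exact le_trans (ih _)
      (sa_idem_norm_apply_le (one_sub_pow_sa n K) (one_sub_pow_idem hiso n K) u)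

lemma commute_Bop_pow (hdc : ∀ m n : ℕ, m ≠ n → DoublyCommute (V m) (V n)) (K N k : ℕ) :
    Commute (Bop V K N) (V N ^ k) := by
  apply Commute.list_prod_left
  intro y hy
  simp only [List.mem_map, List.mem_range] at hy
  obtain ⟨n, hn, rfl⟩ := hy
  have hne : n ≠ N := Nat.ne_of_lt hn
  exact (Commute.one_left _).sub_left
    (((commute_VV hdc hne).pow_pow K k).mul_left ((commute_AV hdc hne).pow_pow K k))

set_option maxHeartbeats 1000000 in
set_option synthInstance.maxHeartbeats 1000000 in
lemma defectOp_adjoint_eq (hiso : ∀ n, adjoint (V n) * V n = 1) (n : ℕ) :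
    defectOp (adjoint (V n)) = Qop V n := by
  unfold defectOp
  rw [adjoint_adjoint]
  have h0 : (0 : H →L[ℂ] H) ≤ Qop V n := by
    conv_rhs => rw [← Qop_idem hiso n]
    nth_rewrite 1 [← (Qop_sa n).star_eq]
    exact star_mul_self_nonneg _
  exact CFC.sqrt_unique (Qop_idem hiso n) h0

lemma partialDefect_adjoint_eq (hiso : ∀ n, adjoint (V n) * V n = 1) (N : ℕ) :
    partialDefect (fun n => adjoint (V n)) N = Pop V N := by
  unfold partialDefect Pop
  have : (fun n => defectOp (adjoint (V n))) = Qop V := funext (defectOp_adjoint_eq hiso)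
  rw [this]

end Aux

/-! ### The abstract Beurling-type theorem for doubly commuting pure isometries -/

set_option maxHeartbeats 2000000 in
theorem isBeurlingSeq_of_dp {V : ℕ → H →L[ℂ] H} (hV : IsDPSeq V)
    (hZ : ∀ x : H, (∀ N : ℕ, ∀ u : H, (∀ n, N ≤ n → adjoint (V n) u = 0) →
      (inner ℂ u x : ℂ) = 0) → x = 0) :
    IsBeurlingSeq V := by
  obtain ⟨hpure, hdc⟩ := hV
  have hiso : ∀ n, adjoint (V n) * V n = 1 := fun n => isometry_adjoint_mul_self (hpure n).1
  -- the wandering subspace W = ⋂ ker V_n*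
  set W : Submodule ℂ H := ⨅ n : ℕ, LinearMap.ker (adjoint (V n) : H →ₗ[ℂ] H) with hWdef
  have hWmem : ∀ w : H, w ∈ W ↔ ∀ n, adjoint (V n) w = 0 := by
    intro w
    simp [hWdef, Submodule.mem_iInf, LinearMap.mem_ker]
  have hWclosed : IsClosed (W : Set H) := by
    rw [hWdef]
    have : ((⨅ n : ℕ, LinearMap.ker (adjoint (V n) : H →ₗ[ℂ] H) : Submodule ℂ H) : Set H)
        = ⋂ n : ℕ, (LinearMap.ker (adjoint (V n) : H →ₗ[ℂ] H) : Set H) := by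
      simp [Submodule.coe_iInf]
    rw [this]
    exact isClosed_iInter fun n => ContinuousLinearMap.isClosed_ker (adjoint (V n))
  haveI : CompleteSpace W := hWclosed.completeSpace_coe
  set D : H →L[ℂ] H := W.subtypeL.comp W.orthogonalProjectionOnto with hDdef
  have hDW : ∀ w : H, (∀ n, adjoint (V n) w = 0) → D w = w := by
    intro w hw
    have : (W.orthogonalProjectionOnto w : H) = w :=
      Submodule.starProjection_eq_self_iff.mpr ((hWmem w).mpr hw)
    simpa [hDdef] using this
  -- basic product facts
  have hid : ∀ N M : ℕ, N ≤ M → ∀ z : H, Pop V N (Pop V M z) = Pop V M z := by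
    intro N M h z
    calc Pop V N (Pop V M z) = (Pop V N * Pop V M) z := rfl
      _ = Pop V M z := by rw [Pop_mul_Pop hdc hiso h]
  have hadjP : ∀ N, adjoint (Pop V N) = Pop V N := fun N => by
    rw [← star_eq_adjoint, (Pop_sa hdc N).star_eq]
  refine ⟨D, ?_, ?_⟩
  · -- IsSeqDefect
    intro x
    have hrw : (fun N : ℕ => partialDefect (fun n => adjoint (V n)) N x)
        = fun N : ℕ => Pop V N x := by
      funext N
      rw [partialDefect_adjoint_eq hiso]
    rw [hrw]
    -- the inner ℂ product identity
    have hinner : ∀ N M : ℕ, N ≤ M →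
        (inner ℂ (Pop V N x) (Pop V M x) : ℂ) = inner ℂ (Pop V M x) (Pop V M x) := by
      intro N M h
      calc (inner ℂ (Pop V N x) (Pop V M x) : ℂ)
          = inner ℂ x (adjoint (Pop V N) (Pop V M x)) := (adjoint_inner_right _ _ _).symm
        _ = inner ℂ x (Pop V M x) := by rw [hadjP, hid N M h]
        _ = inner ℂ x (adjoint (Pop V M) (Pop V M x)) := by rw [hadjP, hid M M le_rfl]
        _ = inner ℂ (Pop V M x) (Pop V M x) := adjoint_inner_right _ _ _
    have hnorm : ∀ N M : ℕ, N ≤ M →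
        ‖Pop V N x - Pop V M x‖ ^ 2 = ‖Pop V N x‖ ^ 2 - ‖Pop V M x‖ ^ 2 := by
      intro N M h
      have e0 := norm_sub_sq (𝕜 := ℂ) (Pop V N x) (Pop V M x)
      have e1 : RCLike.re (inner ℂ (Pop V N x) (Pop V M x) : ℂ) = ‖Pop V M x‖ ^ 2 := by
        rw [hinner N M h]
        rw [inner_self_eq_norm_mul_norm (𝕜 := ℂ)]
        ring
      rw [e0, e1]
      ring
    have hdec : ∀ N M : ℕ, N ≤ M → ‖Pop V M x‖ ≤ ‖Pop V N x‖ := by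
      intro N M h
      have := hnorm N M h
      nlinarith [sq_nonneg ‖Pop V N x - Pop V M x‖, norm_nonneg (Pop V N x),
        norm_nonneg (Pop V M x)]
    obtain ⟨L, hL⟩ : ∃ L, Tendsto (fun N => ‖Pop V N x‖) atTop (𝓝 L) :=
      ⟨_, tendsto_atTop_ciInf (fun a b hab => hdec a b hab)
        ⟨0, fun y ⟨n, hn⟩ => hn ▸ norm_nonneg _⟩⟩
    have hc : CauchySeq fun N => ‖Pop V N x‖ ^ 2 := ((hL.pow 2)).cauchySeq
    have hcauchy : CauchySeq fun N => Pop V N x := by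
      rw [Metric.cauchySeq_iff]
      intro ε hε
      obtain ⟨N₀, hN₀⟩ := Metric.cauchySeq_iff.mp hc (ε ^ 2) (by positivity)
      refine ⟨N₀, fun m hm n hn => ?_⟩
      have key : ∀ a b : ℕ, N₀ ≤ a → N₀ ≤ b → a ≤ b → dist (Pop V a x) (Pop V b x) < ε := by
        intro a b ha hb hab
        have h1 := hN₀ a ha b hb
        rw [Real.dist_eq] at h1
        have h2 : dist (Pop V a x) (Pop V b x) ^ 2 < ε ^ 2 := by
          rw [dist_eq_norm, hnorm a b hab]
          calc ‖Pop V a x‖ ^ 2 - ‖Pop V b x‖ ^ 2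
              ≤ |‖Pop V a x‖ ^ 2 - ‖Pop V b x‖ ^ 2| := le_abs_self _
            _ < ε ^ 2 := h1
        exact lt_of_pow_lt_pow_left₀ 2 hε.le h2
      rcases le_total m n with h | h
      · exact key m n hm hn h
      · rw [dist_comm]; exact key n m hn hm h
    obtain ⟨y, hy⟩ := cauchySeq_tendsto_of_complete hcauchy
    have hPy : ∀ N, Pop V N y = y := by
      intro N
      have h1 : Tendsto (fun M => Pop V N (Pop V M x)) atTop (𝓝 (Pop V N y)) :=
        ((Pop V N).continuous.tendsto y).comp hy
      have h2 : ∀ᶠ M in atTop, Pop V N (Pop V M x) = Pop V M x :=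
        eventually_atTop.mpr ⟨N, fun M hM => hid N M hM x⟩
      exact tendsto_nhds_unique (h1.congr' h2) hy
    have hyW : ∀ n, adjoint (V n) y = 0 := by
      intro n
      have : adjoint (V n) (Pop V (n + 1) y) = (adjoint (V n) * Pop V (n + 1)) y := rfl
      rw [← hPy (n + 1), this, Pop_A_zero hdc hiso (Nat.lt_succ_self n), zero_apply]
    have hxyW : ∀ w ∈ W, (inner ℂ (x - y) w : ℂ) = 0 := by
      intro w hw
      have hw' : ∀ n, adjoint (V n) w = 0 := (hWmem w).mp hw
      have hPNw : ∀ N : ℕ, (inner ℂ (Pop V N x) w : ℂ) = inner ℂ x w := by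
        intro N
        calc (inner ℂ (Pop V N x) w : ℂ) = inner ℂ (adjoint (Pop V N) x) w := by rw [hadjP]
          _ = inner ℂ x (Pop V N w) := adjoint_inner_left _ _ _
          _ = inner ℂ x w := by rw [Pop_apply_w fun n _ => hw' n]
      have h1 : Tendsto (fun N => (inner ℂ (Pop V N x) w : ℂ)) atTop (𝓝 (inner ℂ y w)) :=
        hy.inner tendsto_const_nhds
      have h2 : Tendsto (fun N => (inner ℂ (Pop V N x) w : ℂ)) atTop (𝓝 (inner ℂ x w)) := by
        simp only [hPNw]
        exact tendsto_const_nhds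
      have := tendsto_nhds_unique h1 h2
      rw [inner_sub_left, this, sub_self]
    have hDx : D x = y := by
      have : (W.orthogonalProjectionOnto x : H) = y :=
        Submodule.eq_starProjection_of_mem_of_inner_eq_zero ((hWmem y).mpr hyW)
          (fun w hw => hxyW w hw)
      simpa [hDdef] using this
    rw [hDx]
    exact hy
  · -- Beurling property
    intro M hMc hDM hMinv
    haveI : CompleteSpace M := hMc.completeSpace_coe
    rw [← Submodule.orthogonal_eq_bot_iff, Submodule.eq_bot_iff]
    intro x hxo
    have hx : ∀ u ∈ M, (inner ℂ u x : ℂ) = 0 := (Submodule.mem_orthogonal M x).mp hxo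
    refine hZ x ?_
    intro N u hu
    have hWM : ∀ w : H, (∀ n, adjoint (V n) w = 0) → w ∈ M := by
      intro w hw
      have := hDM w
      rwa [hDW w hw] at this
    have hMpow : ∀ n k (z : H), z ∈ M → (V n ^ k) z ∈ M := by
      intro n k
      induction k with
      | zero => intro z hz; simpa using hz
      | succ k ih =>
        intro z hz
        have : (V n ^ (k + 1)) z = V n ((V n ^ k) z) := by rw [pow_succ']; rfl
        rw [this]
        exact hMinv n _ (ih z hz)
    -- B_K u ∈ M
    have hBM : ∀ K N' (u : H), (∀ n, N' ≤ n → adjoint (V n) u = 0) → Bop V K N' u ∈ M := by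
      intro K N'
      induction N' with
      | zero =>
        intro u hu
        rw [Bop_zero, ContinuousLinearMap.one_apply]
        exact hWM u fun n => hu n (Nat.zero_le n)
      | succ N' ih =>
        intro u hu
        rw [Bop_succ, ContinuousLinearMap.mul_apply, telescope hiso N' K, ContinuousLinearMap.sum_apply, map_sum]
        apply Submodule.sum_mem
        intro k _
        have hterm : (V N' ^ k * Qop V N' * adjoint (V N') ^ k) u
            = (V N' ^ k) (Qop V N' ((adjoint (V N') ^ k) u)) := rfl
        rw [hterm]
        set w : H := Qop V N' ((adjoint (V N') ^ k) u) with hwdef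
        have hwU : ∀ n, N' ≤ n → adjoint (V n) w = 0 := by
          intro n hn
          rcases eq_or_lt_of_le hn with heq | hlt
          · rw [← heq]
            have h1 : adjoint (V N') w
                = (adjoint (V N') * Qop V N') ((adjoint (V N') ^ k) u) := rfl
            rw [h1, A_mul_Qop hiso, zero_apply]
          · have hne : n ≠ N' := by omega
            have e1 := (commute_AQ hdc hne).eq
            have e2 := ((commute_AA hdc hne).pow_right k).eq
            calc adjoint (V n) w
                = (adjoint (V n) * (Qop V N' * adjoint (V N') ^ k)) u := rfl
              _ = ((Qop V N' * adjoint (V N') ^ k) * adjoint (V n)) u := by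
                  rw [← mul_assoc, e1, mul_assoc, e2, ← mul_assoc]
              _ = (Qop V N' * adjoint (V N') ^ k) (adjoint (V n) u) := rfl
              _ = 0 := by rw [hu n (by omega), map_zero]
        have hcomm : Bop V K N' ((V N' ^ k) w) = (V N' ^ k) (Bop V K N' w) := by
          calc Bop V K N' ((V N' ^ k) w) = (Bop V K N' * V N' ^ k) w := rfl
            _ = (V N' ^ k * Bop V K N') w := by rw [(commute_Bop_pow hdc K N' k).eq]
            _ = (V N' ^ k) (Bop V K N' w) := rfl
        rw [hcomm]
        exact hMpow N' k _ (ih w hwU)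
    -- B_K u → u
    have hbound : ∀ N' K, ‖u - Bop V K N' u‖
        ≤ ∑ n ∈ Finset.range N', ‖(adjoint (V n) ^ K) u‖ := by
      intro N' K
      induction N' with
      | zero => simp [Bop_zero]
      | succ n ih =>
        rw [Finset.sum_range_succ]
        have h1 : u - Bop V K (n + 1) u
            = (u - Bop V K n u) + Bop V K n ((V n ^ K * adjoint (V n) ^ K) u) := by
          rw [Bop_succ, ContinuousLinearMap.mul_apply, sub_apply, ContinuousLinearMap.one_apply, map_sub]
          abel
        rw [h1]
        refine le_trans (norm_add_le _ _) (add_le_add ih ?_)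
        calc ‖Bop V K n ((V n ^ K * adjoint (V n) ^ K) u)‖
            ≤ ‖(V n ^ K * adjoint (V n) ^ K) u‖ := Bop_norm_le hiso K n _
          _ = ‖(V n ^ K) ((adjoint (V n) ^ K) u)‖ := by rw [ContinuousLinearMap.mul_apply]
          _ = ‖(adjoint (V n) ^ K) u‖ := pow_isometry (hpure n).1 K _
    have hsum0 : Tendsto (fun K => ∑ n ∈ Finset.range N, ‖(adjoint (V n) ^ K) u‖)
        atTop (𝓝 0) := by
      have h0 : ∀ n ∈ Finset.range N,
          Tendsto (fun K => ‖(adjoint (V n) ^ K) u‖) atTop (𝓝 0) := by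
        intro n _
        simpa using ((hpure n).2 u).norm
      simpa using tendsto_finset_sum (Finset.range N) h0
    have hBu : Tendsto (fun K => Bop V K N u) atTop (𝓝 u) := by
      have h1 : Tendsto (fun K => ‖Bop V K N u - u‖) atTop (𝓝 0) := by
        refine squeeze_zero (fun K => norm_nonneg _) (fun K => ?_) hsum0
        rw [norm_sub_rev]
        exact hbound N K
      exact tendsto_iff_norm_sub_tendsto_zero.mpr h1
    have hinner0 : ∀ K, (inner ℂ (Bop V K N u) x : ℂ) = 0 := fun K => hx _ (hBM K N u hu)
    have h2 : Tendsto (fun K => (inner ℂ (Bop V K N u) x : ℂ)) atTop (𝓝 (inner ℂ u x)) :=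
      hBu.inner tendsto_const_nhds
    have h3 : Tendsto (fun K => (inner ℂ (Bop V K N u) x : ℂ)) atTop (𝓝 0) := by
      simp only [hinner0]
      exact tendsto_const_nhds
    exact tendsto_nhds_unique h2 h3

/-! ### Hardy space lemmas -/

section Hardy

variable {E : Type u} [NormedAddCommGroup E] [InnerProductSpace ℂ E] [CompleteSpace E]

lemma finsupp_sub_add {α : ℕ →₀ ℕ} {n : ℕ} (h : α n ≠ 0) :
    (α - Finsupp.single n 1) + Finsupp.single n 1 = α := by
  ext m
  simp only [Finsupp.add_apply, Finsupp.tsub_apply, Finsupp.single_apply]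
  by_cases hm : n = m
  · subst hm; simp; omega
  · simp [hm]

lemma hasSum_lp_single (G : lp (fun _ : (ℕ →₀ ℕ) => E) 2) :
    HasSum (fun β : ℕ →₀ ℕ => lp.single 2 β (G β)) G :=
  lp.hasSum_single (by norm_num) G

lemma inner_single_single (α γ : ℕ →₀ ℕ) (e y : E) :
    (inner ℂ (lp.single 2 α e) (lp.single 2 γ y : lp (fun _ : (ℕ →₀ ℕ) => E) 2) : ℂ)
      = if γ = α then inner ℂ e y else 0 := by
  rw [lp.inner_single_left]
  by_cases h : γ = α
  · subst h; rw [if_pos rfl, lp.single_apply_self]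
  · have h0 : (lp.single 2 γ y : lp (fun _ : (ℕ →₀ ℕ) => E) 2) α = 0 :=
      lp.single_apply_ne _ _ _ (fun hc => h hc.symm)
    rw [if_neg h, h0, inner_zero_right]

variable (Mz : ℕ → lp (fun _ : (ℕ →₀ ℕ) => E) 2 →L[ℂ] lp (fun _ : (ℕ →₀ ℕ) => E) 2)
  (hMz : IsCoordMult Mz)
include hMz

lemma mz_hasSum (n : ℕ) (G : lp (fun _ : (ℕ →₀ ℕ) => E) 2) :
    HasSum (fun β : ℕ →₀ ℕ => lp.single 2 (β + Finsupp.single n 1) (G β)) (Mz n G) := by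
  have h0 := (Mz n).hasSum (hasSum_lp_single G)
  have he : (fun β : ℕ →₀ ℕ => Mz n (lp.single 2 β (G β)))
      = fun β => lp.single 2 (β + Finsupp.single n 1) (G β) :=
    funext fun β => hMz n β (G β)
  rw [← he]
  exact h0

lemma inner_single_mz (n : ℕ) (α : ℕ →₀ ℕ) (e : E) (G : lp (fun _ : (ℕ →₀ ℕ) => E) 2) :
    (inner ℂ (lp.single 2 α e) (Mz n G) : ℂ)
      = if α n = 0 then 0 else inner ℂ e (G (α - Finsupp.single n 1)) := by
  have h2 := (innerSL ℂ (lp.single 2 α e : lp (fun _ : (ℕ →₀ ℕ) => E) 2)).hasSum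
    (mz_hasSum Mz hMz n G)
  by_cases hα : α n = 0
  · rw [if_pos hα]
    have h3 : (fun β : ℕ →₀ ℕ => (innerSL ℂ (lp.single 2 α e : lp (fun _ : (ℕ →₀ ℕ) => E) 2))
        (lp.single 2 (β + Finsupp.single n 1) (G β))) = fun _ => (0 : ℂ) := by
      funext β
      show (inner ℂ (lp.single 2 α e)
        (lp.single 2 (β + Finsupp.single n 1) (G β) : lp (fun _ : (ℕ →₀ ℕ) => E) 2) : ℂ) = 0
      rw [inner_single_single, if_neg]
      intro hc
      have := congrArg (fun γ : ℕ →₀ ℕ => γ n) hc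
      simp only [Finsupp.add_apply, Finsupp.single_eq_same] at this
      omega
    rw [h3] at h2
    exact h2.unique hasSum_zero
  · rw [if_neg hα]
    have hβ₀ := finsupp_sub_add (α := α) (n := n) hα
    have h3 : (fun β : ℕ →₀ ℕ => (innerSL ℂ (lp.single 2 α e : lp (fun _ : (ℕ →₀ ℕ) => E) 2))
          (lp.single 2 (β + Finsupp.single n 1) (G β)))
        = fun β => if β = α - Finsupp.single n 1
            then (inner ℂ e (G (α - Finsupp.single n 1)) : ℂ) else 0 := by
      funext β
      show (inner ℂ (lp.single 2 α e)
        (lp.single 2 (β + Finsupp.single n 1) (G β) : lp (fun _ : (ℕ →₀ ℕ) => E) 2) : ℂ) = _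
      rw [inner_single_single]
      by_cases hb : β = α - Finsupp.single n 1
      · subst hb
        rw [if_pos hβ₀, if_pos rfl]
      · rw [if_neg, if_neg hb]
        intro hc
        exact hb (add_right_cancel (hc.trans hβ₀.symm) : β = α - Finsupp.single n 1)
    rw [h3] at h2
    exact h2.unique (hasSum_ite_eq _ _)

lemma mz_coord (n : ℕ) (β : ℕ →₀ ℕ) (F : lp (fun _ : (ℕ →₀ ℕ) => E) 2) :
    (Mz n F) (β + Finsupp.single n 1) = F β := by
  refine ext_inner_left ℂ fun e => ?_
  have hsub : (β + Finsupp.single n 1) - Finsupp.single n 1 = β := by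
    ext m
    simp only [Finsupp.tsub_apply, Finsupp.add_apply]
    omega
  have h4 := lp.inner_single_left (𝕜 := ℂ) (β + Finsupp.single n 1) e (Mz n F)
  have h5 := lp.inner_single_left (𝕜 := ℂ) β e F
  have h6 := inner_single_mz Mz hMz n (β + Finsupp.single n 1) e F
  rw [if_neg (by simp only [Finsupp.add_apply, Finsupp.single_eq_same]; omega), hsub] at h6
  exact h4.symm.trans h6

lemma mz_isometry (n : ℕ) (F : lp (fun _ : (ℕ →₀ ℕ) => E) 2) : ‖Mz n F‖ = ‖F‖ := by
  have h2 := (innerSL ℂ (Mz n F)).hasSum (mz_hasSum Mz hMz n F)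
  have h3 : (fun β : ℕ →₀ ℕ => (innerSL ℂ (Mz n F))
        (lp.single 2 (β + Finsupp.single n 1) (F β)))
      = fun β => (inner ℂ (F β) (F β) : ℂ) := by
    funext β
    show (inner ℂ (Mz n F)
      (lp.single 2 (β + Finsupp.single n 1) (F β) : lp (fun _ : (ℕ →₀ ℕ) => E) 2) : ℂ) = _
    rw [lp.inner_single_right, mz_coord Mz hMz]
  rw [h3] at h2
  have h5 : (inner ℂ (Mz n F) (Mz n F) : ℂ) = inner ℂ F F := h2.unique (lp.hasSum_inner F F)
  have e1 := inner_self_eq_norm_mul_norm (𝕜 := ℂ) (Mz n F)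
  have e2 := inner_self_eq_norm_mul_norm (𝕜 := ℂ) F
  have e3 : ‖Mz n F‖ * ‖Mz n F‖ = ‖F‖ * ‖F‖ := by
    rw [← e1, ← e2, h5]
  rw [← Real.sqrt_mul_self (norm_nonneg (Mz n F)), e3,
    Real.sqrt_mul_self (norm_nonneg F)]

lemma mz_adjoint_single_zero (n : ℕ) {α : ℕ →₀ ℕ} (e : E) (h : α n = 0) :
    adjoint (Mz n) (lp.single 2 α e) = 0 := by
  have h0 : ∀ G, (inner ℂ (adjoint (Mz n) (lp.single 2 α e)) G : ℂ) = 0 := by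
    intro G
    rw [adjoint_inner_left, inner_single_mz Mz hMz, if_pos h]
  exact inner_self_eq_zero.mp (h0 _)

lemma mz_adjoint_single (n : ℕ) {α : ℕ →₀ ℕ} (e : E) (h : ¬ α n = 0) :
    adjoint (Mz n) (lp.single 2 α e) = lp.single 2 (α - Finsupp.single n 1) e := by
  have h0 : ∀ G, (inner ℂ (adjoint (Mz n) (lp.single 2 α e)
      - lp.single 2 (α - Finsupp.single n 1) e) G : ℂ) = 0 := by
    intro G
    rw [inner_sub_left, adjoint_inner_left, inner_single_mz Mz hMz, if_neg h,
      lp.inner_single_left, sub_self]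
  exact sub_eq_zero.mp (inner_self_eq_zero.mp (h0 _))

lemma mz_adjoint_pow_single (n k : ℕ) {α : ℕ →₀ ℕ} (e : E) (h : α n < k) :
    (adjoint (Mz n) ^ k) (lp.single 2 α e) = 0 := by
  induction k generalizing α with
  | zero => omega
  | succ k ih =>
    have hstep : (adjoint (Mz n) ^ (k + 1)) (lp.single 2 α e)
        = (adjoint (Mz n) ^ k) (adjoint (Mz n) (lp.single 2 α e)) := by
      rw [pow_succ, ContinuousLinearMap.mul_apply]
    rw [hstep]
    by_cases hα : α n = 0
    · rw [mz_adjoint_single_zero Mz hMz n e hα, map_zero]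
    · rw [mz_adjoint_single Mz hMz n e hα]
      refine ih ?_
      rw [Finsupp.tsub_apply, Finsupp.single_eq_same]
      omega

lemma mz_adjoint_pow_tendsto (n : ℕ) (F : lp (fun _ : (ℕ →₀ ℕ) => E) 2) :
    Tendsto (fun k => (adjoint (Mz n) ^ k) F) atTop (𝓝 0) := by
  rw [Metric.tendsto_atTop]
  intro ε hε
  have hsum := hasSum_lp_single F
  rw [HasSum] at hsum
  obtain ⟨t, ht⟩ := (Metric.tendsto_nhds.mp hsum (ε / 2) (half_pos hε)).exists
  refine ⟨(t.sup fun β => β n) + 1, fun k hk => ?_⟩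
  have hP : (adjoint (Mz n) ^ k) (∑ β ∈ t, lp.single 2 β (F β)) = 0 := by
    rw [map_sum]
    refine Finset.sum_eq_zero fun β hβ => ?_
    refine mz_adjoint_pow_single Mz hMz n k (F β) ?_
    have h2 : β n ≤ t.sup fun γ : ℕ →₀ ℕ => γ n :=
      Finset.le_sup (f := fun γ : ℕ →₀ ℕ => γ n) hβ
    omega
  have hcontr : ‖(adjoint (Mz n) ^ k) (F - ∑ β ∈ t, lp.single 2 β (F β))‖
      ≤ ‖F - ∑ β ∈ t, lp.single 2 β (F β)‖ := by
    have hpow : adjoint (Mz n) ^ k = adjoint (Mz n ^ k) := by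
      rw [← star_eq_adjoint, ← star_pow, star_eq_adjoint]
    rw [hpow]
    exact norm_adjoint_apply_le (fun z => pow_isometry (mz_isometry Mz hMz n) k z) _
  calc dist ((adjoint (Mz n) ^ k) F) 0
      = ‖(adjoint (Mz n) ^ k) F‖ := by rw [dist_zero_right]
    _ = ‖(adjoint (Mz n) ^ k) (F - ∑ β ∈ t, lp.single 2 β (F β))‖ := by
        rw [map_sub, hP, sub_zero]
    _ ≤ ‖F - ∑ β ∈ t, lp.single 2 β (F β)‖ := hcontr
    _ < ε := by
        rw [dist_eq_norm] at ht
        rw [norm_sub_rev]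
        linarith

end Hardy

set_option maxHeartbeats 2000000

/-- **Theorem 5.1.** Let `S` be a doubly commuting submodule of `H²_E(𝔻_2^∞)`: a closed
subspace invariant under every coordinate multiplication operator `M_{ζ_n}` such that the
restricted sequence `𝐑 = (M_{ζ_1}|_S, M_{ζ_2}|_S, …)` is doubly commuting. Then `𝐑` is a
doubly commuting sequence of pure isometries on `S` (class `𝒟𝒫(S)`) and `𝐑` is of
Beurling type: the smallest closed subspace of `S` containing the defect space `𝔇_{𝐑*}`
and invariant under every `M_{ζ_n}|_S` is `S` itself. -/
theorem restriction_to_doubly_commuting_submodule_is_beurling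
    {E : Type u} [NormedAddCommGroup E] [InnerProductSpace ℂ E] [CompleteSpace E]
    (Mz : ℕ → lp (fun _ : (ℕ →₀ ℕ) => E) 2 →L[ℂ] lp (fun _ : (ℕ →₀ ℕ) => E) 2)
    (hMz : IsCoordMult Mz)
    (S : Submodule ℂ (lp (fun _ : (ℕ →₀ ℕ) => E) 2))
    (hSc : IsClosed (S : Set (lp (fun _ : (ℕ →₀ ℕ) => E) 2)))
    (hSinv : ∀ n, ∀ x ∈ S, Mz n x ∈ S)
    (hdc : RestrictedDoublyCommuting Mz S) :
    haveI : CompleteSpace S := hSc.completeSpace_coe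
    IsDPSeq (fun n => clmRestrict (Mz n) (hSinv n)) ∧
      IsBeurlingSeq (fun n => clmRestrict (Mz n) (hSinv n)) := by
  haveI hS : CompleteSpace S := hSc.completeSpace_coe
  have hcoepow : ∀ n k (x : ↥S),
      (((clmRestrict (Mz n) (hSinv n) ^ k) x : ↥S) : lp (fun _ : (ℕ →₀ ℕ) => E) 2)
        = (Mz n ^ k) (x : lp (fun _ : (ℕ →₀ ℕ) => E) 2) := by
    intro n k
    induction k with
    | zero => intro x; rw [pow_zero, pow_zero, ContinuousLinearMap.one_apply, ContinuousLinearMap.one_apply]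
    | succ k ih =>
      intro x
      rw [pow_succ, ContinuousLinearMap.mul_apply, pow_succ, ContinuousLinearMap.mul_apply, ih ((clmRestrict (Mz n) (hSinv n)) x)]
      rfl
  have hVnorm : ∀ n (x : ↥S), ‖clmRestrict (Mz n) (hSinv n) x‖ = ‖x‖ := by
    intro n x
    calc ‖clmRestrict (Mz n) (hSinv n) x‖
        = ‖Mz n (x : lp (fun _ : (ℕ →₀ ℕ) => E) 2)‖ := rfl
      _ = ‖(x : lp (fun _ : (ℕ →₀ ℕ) => E) 2)‖ := mz_isometry Mz hMz n _
      _ = ‖x‖ := rfl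
  have hVadj_le : ∀ n k (x : ↥S), ‖(adjoint (clmRestrict (Mz n) (hSinv n)) ^ k) x‖
      ≤ ‖(adjoint (Mz n) ^ k) (x : lp (fun _ : (ℕ →₀ ℕ) => E) 2)‖ := by
    intro n k x
    have hpowadj : adjoint (clmRestrict (Mz n) (hSinv n)) ^ k
        = adjoint (clmRestrict (Mz n) (hSinv n) ^ k) := by
      rw [← star_eq_adjoint, ← star_pow, star_eq_adjoint]
    have hpowadj2 : adjoint (Mz n) ^ k = adjoint (Mz n ^ k) := by
      rw [← star_eq_adjoint, ← star_pow, star_eq_adjoint]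
    rw [hpowadj, hpowadj2]
    set R : ↥S →L[ℂ] ↥S := clmRestrict (Mz n) (hSinv n) ^ k with hRdef
    set y : ↥S := adjoint R x with hydef
    have h1 : (inner ℂ y y : ℂ)
        = inner ℂ (adjoint (Mz n ^ k) (x : lp (fun _ : (ℕ →₀ ℕ) => E) 2))
            ((y : ↥S) : lp (fun _ : (ℕ →₀ ℕ) => E) 2) := by
      calc (inner ℂ y y : ℂ) = inner ℂ x (R y) := adjoint_inner_left R y x
        _ = inner ℂ ((x : ↥S) : lp (fun _ : (ℕ →₀ ℕ) => E) 2)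
              (((R y : ↥S) : lp (fun _ : (ℕ →₀ ℕ) => E) 2)) := Submodule.coe_inner S x (R y)
        _ = inner ℂ ((x : ↥S) : lp (fun _ : (ℕ →₀ ℕ) => E) 2)
              ((Mz n ^ k) ((y : ↥S) : lp (fun _ : (ℕ →₀ ℕ) => E) 2)) := by
            rw [hRdef, hcoepow n k y]
        _ = _ := (adjoint_inner_left (Mz n ^ k) _ _).symm
    have e1 := inner_self_eq_norm_mul_norm (𝕜 := ℂ) y
    have e3 := norm_inner_le_norm (𝕜 := ℂ)
      (adjoint (Mz n ^ k) (x : lp (fun _ : (ℕ →₀ ℕ) => E) 2))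
      ((y : ↥S) : lp (fun _ : (ℕ →₀ ℕ) => E) 2)
    have e4 : ‖y‖ * ‖y‖ ≤ ‖adjoint (Mz n ^ k) (x : lp (fun _ : (ℕ →₀ ℕ) => E) 2)‖ * ‖y‖ := by
      rw [← e1, h1]
      exact le_trans (RCLike.re_le_norm _) e3
    nlinarith [norm_nonneg y,
      norm_nonneg (adjoint (Mz n ^ k) (x : lp (fun _ : (ℕ →₀ ℕ) => E) 2))]
  have hVpure : ∀ n (x : ↥S),
      Tendsto (fun k => (adjoint (clmRestrict (Mz n) (hSinv n)) ^ k) x) atTop (𝓝 0) := by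
    intro n x
    rw [tendsto_zero_iff_norm_tendsto_zero]
    refine squeeze_zero (fun k => norm_nonneg _) (fun k => hVadj_le n k x) ?_
    simpa using (mz_adjoint_pow_tendsto Mz hMz n (x : lp (fun _ : (ℕ →₀ ℕ) => E) 2)).norm
  have hdp : IsDPSeq fun n => clmRestrict (Mz n) (hSinv n) :=
    ⟨fun n => ⟨hVnorm n, hVpure n⟩, hdc hSc hSinv⟩
  refine ⟨hdp, isBeurlingSeq_of_dp hdp ?_⟩
  intro x hx
  have hcoord : ∀ α : ℕ →₀ ℕ, ((x : ↥S) : lp (fun _ : (ℕ →₀ ℕ) => E) 2) α = 0 := by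
    intro α
    have hαn : ∀ n, α.support.sup id + 1 ≤ n → α n = 0 := by
      intro n hn
      by_contra hne
      have hmem : n ∈ α.support := Finsupp.mem_support_iff.mpr hne
      have h2 : n ≤ α.support.sup id :=
        Finset.le_sup (f := (_root_.id : ℕ → ℕ)) hmem
      omega
    have key : ∀ e : E,
        (inner ℂ (lp.single 2 α e) ((x : ↥S) : lp (fun _ : (ℕ →₀ ℕ) => E) 2) : ℂ) = 0 := by
      intro e
      set u : ↥S := S.orthogonalProjectionOnto (lp.single 2 α e) with hudef
      have hsub : lp.single 2 α e - ((u : ↥S) : lp (fun _ : (ℕ →₀ ℕ) => E) 2) ∈ Sᗮ :=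
        Submodule.sub_starProjection_mem_orthogonal (K := S) (lp.single 2 α e)
      have hu0 : ∀ n, α.support.sup id + 1 ≤ n →
          adjoint (clmRestrict (Mz n) (hSinv n)) u = 0 := by
        intro n hn
        set y : ↥S := adjoint (clmRestrict (Mz n) (hSinv n)) u with hydef
        have h1 : (inner ℂ y y : ℂ) = 0 := by
          calc (inner ℂ y y : ℂ)
              = inner ℂ u (clmRestrict (Mz n) (hSinv n) y) :=
                adjoint_inner_left (clmRestrict (Mz n) (hSinv n)) y u
            _ = inner ℂ ((u : ↥S) : lp (fun _ : (ℕ →₀ ℕ) => E) 2)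
                  (Mz n ((y : ↥S) : lp (fun _ : (ℕ →₀ ℕ) => E) 2)) :=
                Submodule.coe_inner S u _
            _ = inner ℂ (lp.single 2 α e)
                  (Mz n ((y : ↥S) : lp (fun _ : (ℕ →₀ ℕ) => E) 2)) := by
                have hmem : Mz n ((y : ↥S) : lp (fun _ : (ℕ →₀ ℕ) => E) 2) ∈ S :=
                  hSinv n _ (y : ↥S).2
                have h2 := (Submodule.mem_orthogonal' S _).mp hsub _ hmem
                rw [inner_sub_left, sub_eq_zero] at h2
                exact h2.symm
            _ = 0 := by rw [inner_single_mz Mz hMz, if_pos (hαn n hn)]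
        exact inner_self_eq_zero.mp h1
      have hux : (inner ℂ u x : ℂ) = 0 := hx _ u hu0
      have hxS : ((x : ↥S) : lp (fun _ : (ℕ →₀ ℕ) => E) 2) ∈ S := (x : ↥S).2
      have hs2 := (Submodule.mem_orthogonal' S _).mp hsub _ hxS
      rw [inner_sub_left, sub_eq_zero] at hs2
      rw [hs2]
      calc (inner ℂ ((u : ↥S) : lp (fun _ : (ℕ →₀ ℕ) => E) 2)
            ((x : ↥S) : lp (fun _ : (ℕ →₀ ℕ) => E) 2) : ℂ)
          = inner ℂ u x := (Submodule.coe_inner S u x).symm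
        _ = 0 := hux
    have h3 := key (((x : ↥S) : lp (fun _ : (ℕ →₀ ℕ) => E) 2) α)
    rw [lp.inner_single_left] at h3
    exact inner_self_eq_zero.mp h3
  have hx0 : ((x : ↥S) : lp (fun _ : (ℕ →₀ ℕ) => E) 2) = 0 := by
    apply lp.ext
    funext α
    rw [hcoord]
    rfl
  exact Submodule.coe_eq_zero.mp hx0


end DCPaper

end
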